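/- Consider the quadratic map q̃ : ℂ² → Herm(2,ℂ), q̃(z) = z z̄ᵀ, with Ω ⊂ Herm(2,ℂ) the cone of positive definite Hermitian 2×2 matrices. Identifying ℂ² with ℝ⁴ and Herm(2,ℂ) with ℝ⁴ via the entries (y₁,y₂,y₃,y₄) of [[y₁, y₃+iy₄],[y₃−iy₄, y₂]], the associated linear map φ_q of the corresponding real quadratic map q : ℝ⁴ → ℝ⁴ satisfies det φ_q(η) = (η₁η₂ − η₃² − η₄²)² for all η, and for η in the dual cone the Laplace transform of the Riesz measure μ_q at −η equals π²(η₁η₂ − η₃² − η₄²)^{−1}. -/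

import Mathlib

/-!
Since `⟨q x, η⟩ = xᵀ φ_q(η) x`, pushing forward along `q` turns the Laplace transform of the
Riesz measure into the Gaussian integral `∫ exp (-xᵀ φ_q(η) x) dx`. Positivity of `η` on
`closure Ω \ {0}` makes `φ_q(η)` positive definite, because `q` maps into `closure Ω` and vanishes
only at `0`. Diagonalising `φ_q(η)` by an orthogonal matrix evaluates the integral as
`√(π ^ 4 / det φ_q(η))`, and `det φ_q(η) = (η₁η₂ - η₃² - η₄²)²` with `η₁η₂ - η₃² - η₄² > 0`.
-/

open MeasureTheory Matrix Real Set

theorem integral_exp_neg_sum_mul_sq {ι : Type*} [Fintype ι] (d : ι → ℝ) :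
    ∫ y : ι → ℝ, exp (-∑ i, d i * y i ^ 2) = ∏ i, √(π / d i) := by
  simp_rw [← Finset.sum_neg_distrib, exp_sum, ← neg_mul]
  rw [integral_fintype_prod_volume_eq_prod (fun i (v : ℝ) ↦ exp (-d i * v ^ 2))]
  simp_rw [integral_gaussian]

namespace Matrix

variable {ι : Type*} [Fintype ι] [DecidableEq ι]

theorem integral_comp_mulVec_of_abs_det_eq_one {E : Type*} [NormedAddCommGroup E]
    [NormedSpace ℝ E] {M : Matrix ι ι ℝ} (hM : |M.det| = 1) (f : (ι → ℝ) → E) :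
    ∫ x, f (M *ᵥ x) = ∫ x, f x := by
  have hdet : IsUnit M.det := isUnit_iff_ne_zero.2 fun h ↦ by simp [h] at hM
  have hmp : MeasurePreserving (toLin' M) volume volume :=
    ⟨(toLin' M).continuous_of_finiteDimensional.measurable, by
      rw [map_matrix_volume_pi_eq_smul_volume_pi hdet.ne_zero, abs_inv, hM]; simp⟩
  have hker : LinearMap.ker (toLin' M) = ⊥ :=
    LinearMap.ker_eq_bot.2 (mulVec_injective_iff_isUnit.2 ((isUnit_iff_isUnit_det M).2 hdet))
  exact hmp.integral_comp ((toLin' M).isClosedEmbedding_of_injective hker).measurableEmbedding f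

theorem abs_det_of_mem_unitaryGroup {U : Matrix ι ι ℝ} (hU : U ∈ unitaryGroup ι ℝ) :
    |U.det| = 1 := by
  have h : U.det * U.det = 1 := by
    conv_lhs => arg 1; rw [← star_trivial U.det, ← det_conjTranspose]
    rw [← det_mul, ← star_eq_conjTranspose, Unitary.star_mul_self_of_mem hU, det_one]
  rcases mul_self_eq_one_iff.1 h with h | h <;> simp [h]

theorem IsHermitian.dotProduct_mulVec_eq_sum_eigenvalues_mul_sq {S : Matrix ι ι ℝ}
    (hS : S.IsHermitian) (x : ι → ℝ) :
    x ⬝ᵥ S *ᵥ x =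
      ∑ i, hS.eigenvalues i * (star (hS.eigenvectorUnitary : Matrix ι ι ℝ) *ᵥ x) i ^ 2 := by
  conv_lhs => rw [hS.spectral_theorem]
  simp only [Unitary.conjStarAlgAut_apply, ← mulVec_mulVec]
  rw [dotProduct_mulVec, ← mulVec_transpose, ← conjTranspose_eq_transpose_of_trivial,
    ← star_eq_conjTranspose, dotProduct]
  refine Finset.sum_congr rfl fun i _ ↦ ?_
  simp only [mulVec_diagonal, Function.comp_apply, RCLike.ofReal_real_eq_id, id]
  ring

theorem PosDef.integral_exp_neg_dotProduct_mulVec {S : Matrix ι ι ℝ} (hS : S.PosDef) :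
    ∫ x : ι → ℝ, exp (-(x ⬝ᵥ S *ᵥ x)) = √(π ^ Fintype.card ι / S.det) := by
  have hU := abs_det_of_mem_unitaryGroup (Unitary.star_mem hS.1.eigenvectorUnitary.2)
  simp_rw [hS.1.dotProduct_mulVec_eq_sum_eigenvalues_mul_sq]
  rw [integral_comp_mulVec_of_abs_det_eq_one hU
      (fun y ↦ exp (-∑ i, hS.1.eigenvalues i * y i ^ 2)),
    integral_exp_neg_sum_mul_sq, hS.1.det_eq_prod_eigenvalues,
    ← sqrt_prod _ fun i _ ↦ (div_pos pi_pos (hS.eigenvalues_pos i)).le]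
  simp [Finset.prod_div_distrib]

end Matrix

def hermQuad (x : Fin 4 → ℝ) : Fin 4 → ℝ :=
  ![(x 0)^2 + (x 1)^2, (x 2)^2 + (x 3)^2, x 0 * x 2 + x 1 * x 3, x 0 * x 3 - x 1 * x 2]

def hermPairing (y η : Fin 4 → ℝ) : ℝ :=
  y 0 * η 0 + y 1 * η 1 + 2 * y 2 * η 2 + 2 * y 3 * η 3

def lorentzCone : Set (Fin 4 → ℝ) :=
  {y | 0 < y 0 ∧ 0 < y 0 * y 1 - (y 2)^2 - (y 3)^2}

def hermPhi (η : Fin 4 → ℝ) : Matrix (Fin 4) (Fin 4) ℝ :=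
  !![η 0, 0, η 2, η 3;
     0, η 0, -η 3, η 2;
     η 2, -η 3, η 1, 0;
     η 3, η 2, 0, η 1]

theorem dotProduct_hermPhi_mulVec (η x : Fin 4 → ℝ) :
    x ⬝ᵥ hermPhi η *ᵥ x = hermPairing (hermQuad x) η := by
  simp [hermPhi, hermPairing, hermQuad, mulVec, dotProduct, Fin.sum_univ_four]
  ring

theorem det_hermPhi (η : Fin 4 → ℝ) :
    (hermPhi η).det = (η 0 * η 1 - (η 2)^2 - (η 3)^2) ^ 2 := by
  simp [hermPhi, det_succ_row_zero, Fin.sum_univ_succ, Fin.succAbove]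
  ring

theorem continuous_hermQuad : Continuous hermQuad := by
  refine continuous_pi fun i ↦ ?_
  fin_cases i <;> simp [hermQuad] <;> fun_prop

theorem mem_closure_lorentzCone_of_nonneg {y : Fin 4 → ℝ} (h0 : 0 ≤ y 0) (h1 : 0 ≤ y 1)
    (h : 0 ≤ y 0 * y 1 - (y 2)^2 - (y 3)^2) : y ∈ closure lorentzCone := by
  have hlim : Filter.Tendsto (fun t : ℝ ↦ y + t • ![1, 1, 0, 0]) (nhdsWithin 0 (Ioi 0))
      (nhds y) := by
    have : Continuous fun t : ℝ ↦ y + t • ![(1 : ℝ), 1, 0, 0] := by fun_prop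
    simpa using (this.tendsto 0).mono_left nhdsWithin_le_nhds
  refine mem_closure_of_tendsto hlim (eventually_mem_nhdsWithin.mono fun t (ht : 0 < t) ↦ ?_)
  simp only [lorentzCone, mem_ofPred_eq, Pi.add_apply, Pi.smul_apply, Fin.isValue, smul_eq_mul,
    cons_val_zero, cons_val_one, cons_val, mul_one, mul_zero, add_zero, sub_pos]
  constructor <;> nlinarith

theorem hermQuad_mem_closure_lorentzCone (x : Fin 4 → ℝ) : hermQuad x ∈ closure lorentzCone := by
  refine mem_closure_lorentzCone_of_nonneg ?_ ?_ ?_ <;>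
    simp only [hermQuad, Fin.isValue, cons_val_zero, cons_val_one, cons_val, sub_nonneg]
  · positivity
  · positivity
  · nlinarith [sq_nonneg (x 0 * x 2 + x 1 * x 3), sq_nonneg (x 0 * x 3 - x 1 * x 2)]

theorem hermQuad_eq_zero_iff {x : Fin 4 → ℝ} : hermQuad x = 0 ↔ x = 0 := by
  refine ⟨fun h ↦ ?_, by rintro rfl; simp [hermQuad]⟩
  have h01 : (x 0)^2 + (x 1)^2 = 0 := congrFun h 0
  have h23 : (x 2)^2 + (x 3)^2 = 0 := congrFun h 1
  funext i
  fin_cases i <;> simp <;> nlinarith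

theorem posDef_hermPhi {η : Fin 4 → ℝ}
    (hη : ∀ y ∈ closure lorentzCone \ {0}, 0 < hermPairing y η) : (hermPhi η).PosDef := by
  refine PosDef.of_dotProduct_mulVec_pos ?_ fun x hx ↦ ?_
  · ext i j
    fin_cases i <;> fin_cases j <;> simp [hermPhi]
  · simpa [dotProduct_hermPhi_mulVec] using
      hη _ ⟨hermQuad_mem_closure_lorentzCone x, hermQuad_eq_zero_iff.not.2 hx⟩

theorem lorentzForm_pos_of_posDef_hermPhi {η : Fin 4 → ℝ} (hη : (hermPhi η).PosDef) :
    0 < η 0 * η 1 - (η 2)^2 - (η 3)^2 := by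
  have key (x : Fin 4 → ℝ) (hx : x ≠ 0) : 0 < hermPairing (hermQuad x) η :=
    dotProduct_hermPhi_mulVec η x ▸ hη.dotProduct_mulVec_pos hx
  have hη1 : 0 < η 1 := by simpa [hermPairing, hermQuad] using key ![0, 0, 1, 0] (by simp)
  have hprod : 0 < η 1 * (η 0 * η 1 - (η 2)^2 - (η 3)^2) := by
    convert key ![η 1, 0, -η 2, -η 3] fun h ↦ hη1.ne' (by simpa using congrFun h 0) using 1
    simp [hermPairing, hermQuad]
    ring
  exact pos_of_mul_pos_right hprod hη1.le

theorem integral_exp_neg_hermPairing_map_hermQuad {η : Fin 4 → ℝ}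
    (hη : ∀ y ∈ closure lorentzCone \ {0}, 0 < hermPairing y η) :
    ∫ y, exp (-(hermPairing y η)) ∂(volume.map hermQuad)
      = π ^ 2 * (η 0 * η 1 - (η 2)^2 - (η 3)^2)⁻¹ := by
  have hφ := posDef_hermPhi hη
  have hD := lorentzForm_pos_of_posDef_hermPhi hφ
  rw [integral_map continuous_hermQuad.aemeasurable (by unfold hermPairing; fun_prop)]
  simp_rw [← dotProduct_hermPhi_mulVec]
  rw [hφ.integral_exp_neg_dotProduct_mulVec, det_hermPhi, Fintype.card_fin,
    show π ^ 4 = (π ^ 2) ^ 2 by ring, ← div_pow, sqrt_sq (by positivity), div_eq_mul_inv]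

/-- For the quadratic map `q̃(z) = z z̄ᵀ` on `ℂ² → Herm(2,ℂ)`,
written in real coordinates (`Herm(2,ℂ) ∋ [[y₁, y₃+iy₄],[y₃-iy₄, y₂]] ↔
(y₁,y₂,y₃,y₄)`, with pairing `⟨y,η⟩ = y₁η₁ + y₂η₂ + 2y₃η₃ + 2y₄η₄`), the
associated linear map `φ_q` satisfies `det φ_q(η) = (η₁η₂ - η₃² - η₄²)²`, and
for `η` in the dual cone the Laplace transform of the Riesz measure at `-η`
equals `π² (η₁η₂ - η₃² - η₄²)⁻¹`. -/
theorem lorentz_hermitian_riesz :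
    let q : (Fin 4 → ℝ) → (Fin 4 → ℝ) := fun x =>
      ![(x 0)^2 + (x 1)^2, (x 2)^2 + (x 3)^2,
        x 0 * x 2 + x 1 * x 3, x 0 * x 3 - x 1 * x 2]
    let pair : (Fin 4 → ℝ) → (Fin 4 → ℝ) → ℝ := fun y η =>
      y 0 * η 0 + y 1 * η 1 + 2 * y 2 * η 2 + 2 * y 3 * η 3
    let Ω : Set (Fin 4 → ℝ) :=
      {y | 0 < y 0 ∧ 0 < y 0 * y 1 - (y 2)^2 - (y 3)^2}
    let φ : (Fin 4 → ℝ) → Matrix (Fin 4) (Fin 4) ℝ := fun η =>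
      !![η 0, 0, η 2, η 3;
         0, η 0, -η 3, η 2;
         η 2, -η 3, η 1, 0;
         η 3, η 2, 0, η 1]
    (∀ (η : Fin 4 → ℝ) (x : Fin 4 → ℝ), x ⬝ᵥ (φ η).mulVec x = pair (q x) η) ∧
    (∀ η : Fin 4 → ℝ, (φ η).det = (η 0 * η 1 - (η 2)^2 - (η 3)^2) ^ 2) ∧
    (∀ η : Fin 4 → ℝ, (∀ y ∈ closure Ω \ {0}, 0 < pair y η) →
      ∫ y, Real.exp (-(pair y η)) ∂(Measure.map q volume)
        = Real.pi ^ 2 * (η 0 * η 1 - (η 2)^2 - (η 3)^2)⁻¹) :=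
  ⟨dotProduct_hermPhi_mulVec, det_hermPhi, fun _ ↦ integral_exp_neg_hermPairing_map_hermQuad⟩
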